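/- arXiv:1111.4066 — 2 statements merged into one kernel-verified Lean document; each statement's English description precedes it below -/
import Mathlib

section
/- Let k ≥ 2 be an integer and n ≥ 1, and let H_{k,n} = (h_{rs}) be the n×n complex matrix with h_{rs} = i^{r−s} if −1 ≤ r−s < k and h_{rs} = 0 otherwise (1 ≤ r,s ≤ n), where i = √−1. Then per(H_{k,n}) = f_{k,k+n−1}. -/
/-!
The entry `i^(r-s)` of `H_{k,n}` factors as `i^r / i^s`, so for every permutation `σ` the product
`∏ h_{r,σ r}` is either `0` or `∏ i^r / ∏ i^(σ r) = 1`: the permanent counts the permutations with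
`-1 ≤ r - σ r < k`. If such a `σ` sends `v` to the first point, then `σ r ≤ r + 1` forces `σ` to be
the cycle `0 ↦ 1 ↦ ⋯ ↦ v ↦ 0` on the first `v + 1` points (and `v < k`), while on the remaining
`n - v - 1` points it is again an arbitrary permutation of the same kind. Hence the counts satisfy
`c 0 = 1`, `c (n + 1) = ∑_{v < min (n + 1) k} c (n - v)`, which is the order-`k` Fibonacci recursion
shifted by `k - 1`.
-/

open Finset

noncomputable def perH (m : ℕ) (a : ℕ → ℕ → ℂ) : ℂ :=
  ∑ σ : Equiv.Perm (Fin m), ∏ i : Fin m, a (i.1 + 1) ((σ i).1 + 1)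

/-- Entry (r,s) (1-based) of the matrix `H_{k,n}` (with all `t_i = 1`):
`i^{r-s}` if `-1 ≤ r-s < k`, and `0` otherwise. -/
noncomputable def hcEntry (k : ℕ) (r s : ℕ) : ℂ :=
  if -1 ≤ (r : ℤ) - s ∧ (r : ℤ) - s < k then
    Complex.I ^ ((r : ℤ) - s)
  else 0

open Equiv

def bandPerms (k n : ℕ) : Finset (Perm (Fin n)) :=
  univ.filter fun σ => ∀ i, (σ i : ℕ) ≤ i + 1 ∧ (i : ℕ) < σ i + k

lemma hcEntry_succ_succ (k r s : ℕ) :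
    hcEntry k (r + 1) (s + 1) =
      if s ≤ r + 1 ∧ r < s + k then Complex.I ^ (r : ℤ) / Complex.I ^ (s : ℤ) else 0 := by
  rw [hcEntry, ← zpow_sub₀ Complex.I_ne_zero]
  push_cast
  congr 1
  · apply propext; omega
  · ring_nf

lemma prod_div_comp_perm {ι G : Type*} [Fintype ι] [CommGroupWithZero G] (g : ι → G)
    (hg : ∀ i, g i ≠ 0) (σ : Perm ι) : ∏ i, g i / g (σ i) = 1 := by
  rw [prod_div_distrib, Equiv.prod_comp σ, div_self (prod_ne_zero_iff.mpr fun i _ => hg i)]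

lemma prod_hcEntry (k n : ℕ) (σ : Perm (Fin n)) :
    ∏ i : Fin n, hcEntry k (i + 1) (σ i + 1) = if σ ∈ bandPerms k n then 1 else 0 := by
  simp only [hcEntry_succ_succ, prod_ite_zero, bandPerms, mem_filter, mem_univ, true_and,
    forall_const]
  rw [prod_div_comp_perm (fun i : Fin n => Complex.I ^ (i : ℤ))
    (fun _ => zpow_ne_zero _ Complex.I_ne_zero)]

lemma perH_hcEntry (k n : ℕ) : perH n (hcEntry k) = #(bandPerms k n) := by
  simp [perH, prod_hcEntry]

lemma eq_finRotate_of_apply_le_succ {p : ℕ} (a : Perm (Fin (p + 1)))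
    (ha : ∀ i, (a i : ℕ) ≤ i + 1) (hlast : a (Fin.last p) = 0) : a = finRotate (p + 1) := by
  -- `∑ a i = ∑ i` leaves no slack in the bounds `a i ≤ i + 1` away from the last point.
  have hsum : ∑ i : Fin p, (a i.castSucc : ℕ) = ∑ i : Fin p, ((i : ℕ) + 1) := by
    have h := Equiv.sum_comp a (fun i => (i : ℕ))
    rw [Fin.sum_univ_castSucc, Fin.sum_univ_castSucc, hlast] at h
    simp only [Fin.val_castSucc, Fin.val_zero, add_zero, Fin.val_last] at h
    rw [h, sum_add_distrib, sum_const, card_univ, Fintype.card_fin, smul_eq_mul, mul_one]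
  have hcast : ∀ i : Fin p, (a i.castSucc : ℕ) = i + 1 :=
    fun i => (sum_eq_sum_iff_of_le fun i _ => ha i.castSucc).mp hsum i (mem_univ i)
  ext i
  induction i using Fin.lastCases with
  | last => simp [hlast]
  | cast i => simp [hcast]

section blockPerm

variable {v m n : ℕ} (h : v + 1 + m = n)

def blockEquiv : Fin (v + 1) ⊕ Fin m ≃ Fin n :=
  finSumFinEquiv.trans (finCongr h)

@[simp] lemma val_blockEquiv_inl (i : Fin (v + 1)) : (blockEquiv h (.inl i) : ℕ) = i := rfl

@[simp] lemma val_blockEquiv_inr (j : Fin m) : (blockEquiv h (.inr j) : ℕ) = v + 1 + j := rfl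

def blockPerm (τ : Perm (Fin m)) : Perm (Fin n) :=
  (blockEquiv h).permCongr (Perm.sumCongr (finRotate (v + 1)) τ)

@[simp] lemma blockPerm_apply_blockEquiv (τ : Perm (Fin m)) (x : Fin (v + 1) ⊕ Fin m) :
    blockPerm h τ (blockEquiv h x) = blockEquiv h (Perm.sumCongr (finRotate (v + 1)) τ x) := by
  simp [blockPerm]

lemma blockPerm_injective : Function.Injective (blockPerm h) :=
  (Equiv.injective _).comp (Perm.sumCongrHom_injective.comp (Prod.mk_right_injective _))

lemma blockPerm_mem_bandPerms_iff (k : ℕ) (τ : Perm (Fin m)) :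
    blockPerm h τ ∈ bandPerms k n ↔ v < k ∧ τ ∈ bandPerms k m := by
  simp only [bandPerms, mem_filter, mem_univ, true_and]
  rw [← (blockEquiv h).forall_congr_right]
  simp only [Sum.forall, blockPerm_apply_blockEquiv, Perm.sumCongr_apply, Sum.map_inl, Sum.map_inr,
    val_blockEquiv_inl, val_blockEquiv_inr, coe_finRotate]
  refine and_congr ⟨fun hrot => by simpa using hrot (Fin.last v), fun hvk a => ?_⟩
    (forall_congr' fun b => by omega)
  have := a.isLt
  split_ifs <;> omega

lemma blockPerm_apply_eq_zero (τ : Perm (Fin m)) :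
    blockPerm h τ ⟨v, by omega⟩ = ⟨0, by omega⟩ := by
  have := blockPerm_apply_blockEquiv h τ (.inl (Fin.last v))
  rwa [Perm.sumCongr_apply, Sum.map_inl, finRotate_last] at this

lemma exists_blockPerm {k : ℕ} {σ : Perm (Fin n)} (hσ : σ ∈ bandPerms k n)
    (hv : σ ⟨v, by omega⟩ = ⟨0, by omega⟩) : ∃ τ, blockPerm h τ = σ := by
  simp only [bandPerms, mem_filter, mem_univ, true_and] at hσ
  have hmaps : Set.MapsTo ((blockEquiv h).symm.permCongr σ) (Set.range .inl) (Set.range .inl) := by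
    rintro _ ⟨i, rfl⟩
    have hle : (σ (blockEquiv h (.inl i)) : ℕ) < v + 1 := by
      rcases eq_or_ne i (Fin.last v) with rfl | hi
      · exact hv ▸ v.succ_pos
      · have := (hσ (blockEquiv h (.inl i))).1
        have := Fin.val_lt_last hi
        simp only [val_blockEquiv_inl] at *
        omega
    exact ⟨⟨_, hle⟩, (blockEquiv h).eq_symm_apply.mpr rfl⟩
  obtain ⟨⟨a, τ⟩, hσ'⟩ := Perm.mem_sumCongrHom_range_of_perm_mapsTo_inl hmaps
  have hkey : ∀ x, σ (blockEquiv h x) = blockEquiv h (Perm.sumCongr a τ x) := fun x => by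
    simpa using (congrArg (blockEquiv h ∘ (· x)) hσ').symm
  have hlast : σ (blockEquiv h (.inl (Fin.last v))) = blockEquiv h (.inl 0) := hv
  have ha : a = finRotate (v + 1) := by
    refine eq_finRotate_of_apply_le_succ a (fun i => ?_) ?_
    · simpa [hkey] using (hσ (blockEquiv h (.inl i))).1
    · exact Sum.inl_injective ((blockEquiv h).injective ((hkey _).symm.trans hlast))
  refine ⟨τ, Equiv.ext fun y => ?_⟩
  obtain ⟨x, rfl⟩ := (blockEquiv h).surjective y
  rw [blockPerm_apply_blockEquiv, hkey, ha]

end blockPerm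

lemma card_filter_bandPerms_apply_eq_zero {k v m n : ℕ} (h : v + 1 + m = n) :
    #{σ ∈ bandPerms k n | σ ⟨v, by omega⟩ = ⟨0, by omega⟩} =
      if v < k then #(bandPerms k m) else 0 := by
  split_ifs with hvk
  · rw [← card_map ⟨blockPerm h, blockPerm_injective h⟩]
    congr 1
    ext σ
    simp only [mem_filter, mem_map, Function.Embedding.coeFn_mk]
    constructor
    · rintro ⟨hσ, hv⟩
      obtain ⟨τ, rfl⟩ := exists_blockPerm h hσ hv
      exact ⟨τ, ((blockPerm_mem_bandPerms_iff h k τ).mp hσ).2, rfl⟩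
    · rintro ⟨τ, hτ, rfl⟩
      exact ⟨(blockPerm_mem_bandPerms_iff h k τ).mpr ⟨hvk, hτ⟩, blockPerm_apply_eq_zero h τ⟩
  · refine card_eq_zero.mpr (filter_eq_empty_iff.mpr fun σ hσ hv => hvk ?_)
    simp only [bandPerms, mem_filter, mem_univ, true_and] at hσ
    simpa [hv] using (hσ ⟨v, by omega⟩).2

lemma card_bandPerms_zero (k : ℕ) : #(bandPerms k 0) = 1 := by
  simp [bandPerms]

lemma card_bandPerms_succ (k n : ℕ) :
    #(bandPerms k (n + 1)) = ∑ v ∈ range (min (n + 1) k), #(bandPerms k (n - v)) := by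
  rw [card_eq_sum_card_fiberwise (f := fun σ => σ.symm 0) (t := univ) fun _ _ => mem_univ _]
  have hfiber (w : Fin (n + 1)) : #{σ ∈ bandPerms k (n + 1) | σ.symm 0 = w} =
      if (w : ℕ) < k then #(bandPerms k (n - w)) else 0 := by
    rw [← card_filter_bandPerms_apply_eq_zero (show (w : ℕ) + 1 + (n - w) = n + 1 by omega)]
    simp_rw [symm_apply_eq, eq_comm]
    rfl
  rw [sum_congr rfl fun w _ => hfiber w,
    Fin.sum_univ_eq_sum_range (fun v => if v < k then #(bandPerms k (n - v)) else 0), ← sum_filter]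
  congr 1
  ext v
  simp only [mem_filter, mem_range]
  omega

lemma sum_Icc_one_eq_sum_range {M : Type*} [AddCommMonoid M] (g : ℤ → M) (k : ℕ) :
    ∑ j ∈ Icc (1 : ℤ) k, g j = ∑ v ∈ range k, g (v + 1) := by
  rw [Int.Icc_eq_finset_map, sum_map]
  simp [add_comm]

lemma genFib_succ {k : ℕ} (hk : 1 ≤ k) {f : ℤ → ℂ}
    (hf0 : ∀ n : ℤ, 1 ≤ n → n ≤ (k : ℤ) - 2 → f n = 0)
    (hfk1 : f ((k : ℤ) - 1) = 1) (hfk : f (k : ℤ) = 1)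
    (hfrec : ∀ n : ℤ, (k : ℤ) < n → f n = ∑ j ∈ Icc (1 : ℤ) (k : ℤ), f (n - j)) (n : ℕ) :
    f (k + (n + 1 : ℕ) - 1) = ∑ v ∈ range (min (n + 1) k), f (k + (n - v : ℕ) - 1) := by
  rcases Nat.eq_zero_or_pos n with rfl | hn
  · simp [min_eq_left hk, hfk, hfk1]
  have hshift : ∀ v ∈ range (min (n + 1) k),
      f (k + (n - v : ℕ) - 1) = f (k + (n + 1 : ℕ) - 1 - (v + 1)) := by
    intro v hv
    rw [mem_range] at hv
    congr 1
    omega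
  rw [sum_congr rfl hshift, hfrec _ (by omega), sum_Icc_one_eq_sum_range]
  refine (sum_subset (range_subset_range.mpr (min_le_right _ _)) fun v hv hv' => hf0 _ ?_ ?_).symm
  all_goals simp only [mem_range] at hv hv'; omega

theorem per_H_eq_genFib_general (k : ℕ) (hk : 2 ≤ k)
    (f : ℤ → ℂ) (hf0 : ∀ n : ℤ, 1 ≤ n → n ≤ (k : ℤ) - 2 → f n = 0)
    (hfk1 : f ((k : ℤ) - 1) = 1) (hfk : f (k : ℤ) = 1)
    (hfrec : ∀ n : ℤ, (k : ℤ) < n → f n = ∑ j ∈ Finset.Icc (1 : ℤ) (k : ℤ), f (n - j))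
    (n : ℕ) :
    perH n (hcEntry k) = f ((k : ℤ) + n - 1) := by
  rw [perH_hcEntry]
  induction n using Nat.strong_induction_on with
  | _ n ih =>
    cases n with
    | zero => simp [card_bandPerms_zero, hfk1]
    | succ n =>
      rw [card_bandPerms_succ, genFib_succ (by omega) hf0 hfk1 hfk hfrec, Nat.cast_sum]
      exact sum_congr rfl fun v hv => ih _ (by simp only [mem_range] at hv; omega)

theorem per_H_eq_genFib (k : ℕ) (hk : 2 ≤ k)
    (f : ℤ → ℂ) (hf0 : ∀ n : ℤ, 1 ≤ n → n ≤ (k : ℤ) - 2 → f n = 0)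
    (hfk1 : f ((k : ℤ) - 1) = 1) (hfk : f (k : ℤ) = 1)
    (hfrec : ∀ n : ℤ, (k : ℤ) < n → f n = ∑ j ∈ Finset.Icc (1 : ℤ) (k : ℤ), f (n - j))
    (n : ℕ) (hn : 1 ≤ n) :
    perH n (hcEntry k) = f ((k : ℤ) + n - 1) :=
  per_H_eq_genFib_general k hk f hf0 hfk1 hfk hfrec n
end

section
/- Let k ≥ 2 be an integer, t_1, …, t_k complex numbers with t_2 ≠ 0, and n ≥ 1. Then per(L_{k,n}) = F_{k,n+1}(t). -/
/-!
Up to transposition, `L_{k,n}` is the upper Hessenberg Toeplitz matrix of the sequence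
`a_{-1} = t_2`, `a_d = t_{d+1} / t_2^d` (`0 ≤ d < k`). Expanding its permanent along the first
column leaves `L_{k,n-1}` and a minor whose top row is shifted one step further along the
sequence; iterating on the latter gives `per L_n = ∑_d a_{-1}^d a_d per L_{n-1-d}`, and since
`a_{-1}^d a_d = t_{d+1}` this is the recurrence of `F_{k,n+1}`.
-/
open Finset

/-- Entry (i,j) (1-based) of the matrix `L_{k,n}`:
`t_{i-j+1} / t_2^{i-j}` if `-1 ≤ i-j < k`, and `0` otherwise. -/
noncomputable def lEntry (k : ℕ) (t : ℤ → ℂ) (i j : ℕ) : ℂ :=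
  if -1 ≤ (i : ℤ) - j ∧ (i : ℤ) - j < k then
    t ((i : ℤ) - j + 1) / t 2 ^ ((i : ℤ) - j)
  else 0

namespace Matrix

theorem permanent_succ_column_zero {R : Type*} [CommSemiring R] {n : ℕ}
    (A : Matrix (Fin (n + 1)) (Fin (n + 1)) R) :
    A.permanent = ∑ i : Fin (n + 1), A i 0 * (A.submatrix i.succAbove Fin.succ).permanent := by
  rw [permanent, univ_perm_fin_succ, ← univ_product_univ]
  simp only [sum_map, Equiv.toEmbedding_apply, sum_product]
  refine sum_congr rfl fun i _ => Fin.cases ?_ (fun i => ?_) i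
  · simp [permanent, Fin.prod_univ_succ, mul_sum]
  · rw [← permanent_permute_cols i.cycleRange, permanent, mul_sum]
    refine sum_congr rfl fun σ _ => ?_
    simp [Fin.prod_univ_succ, Fin.succAbove_cycleRange]

end Matrix

section ToeplitzHessenberg

variable {R : Type*}

/-- Indexed by `j - i` rather than `i - j` because `Matrix.permanent` multiplies the entries
`M (σ i) i`, the transpose of the convention of `perH`. -/
def toeplitz (a : ℤ → R) (m : ℕ) : Matrix (Fin m) (Fin m) R :=
  Matrix.of fun i j => a ((j : ℤ) - i)

/-- The minors met when `toeplitz a` is expanded along its first column: the top row is replaced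
by `a r, a (r + 1), …`. -/
def toeplitzShiftTop (a : ℤ → R) (r m : ℕ) : Matrix (Fin m) (Fin m) R :=
  Matrix.of fun i j => if (i : ℕ) = 0 then a (r + j) else a ((j : ℤ) - i)

theorem toeplitzShiftTop_zero (a : ℤ → R) (m : ℕ) : toeplitzShiftTop a 0 m = toeplitz a m := by
  ext i j
  by_cases hi : (i : ℕ) = 0 <;> simp [toeplitzShiftTop, toeplitz, hi]

variable [CommSemiring R] {a : ℤ → R}

theorem permanent_toeplitzShiftTop_succ_succ (ha : ∀ d < -1, a d = 0) (r m : ℕ) :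
    (toeplitzShiftTop a r (m + 2)).permanent =
      a r * (toeplitzShiftTop a 0 (m + 1)).permanent +
        a (-1) * (toeplitzShiftTop a (r + 1) (m + 1)).permanent := by
  have minor_zero : (toeplitzShiftTop a r (m + 2)).submatrix (Fin.succAbove 0) Fin.succ =
      toeplitzShiftTop a 0 (m + 1) := by
    rw [toeplitzShiftTop_zero]
    ext i j
    simp [toeplitzShiftTop, toeplitz]
  have minor_one : (toeplitzShiftTop a r (m + 2)).submatrix (Fin.succAbove 1) Fin.succ =
      toeplitzShiftTop a (r + 1) (m + 1) := by
    ext i j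
    refine Fin.cases ?_ (fun i => ?_) i
    · simp [toeplitzShiftTop, add_right_comm _ (1 : ℤ), add_assoc]
    · simp [toeplitzShiftTop]
  rw [Matrix.permanent_succ_column_zero, Fin.sum_univ_succ, Fin.sum_univ_succ,
    sum_eq_zero fun i _ => ?_]
  · rw [Fin.succ_zero_eq_one, minor_zero, minor_one]
    simp [toeplitzShiftTop]
  · have : toeplitzShiftTop a r (m + 2) i.succ.succ 0 = 0 := ha _ (by simp; omega)
    rw [this, zero_mul]

theorem permanent_toeplitzShiftTop_succ (ha : ∀ d < -1, a d = 0) (m r : ℕ) :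
    (toeplitzShiftTop a r (m + 1)).permanent =
      ∑ d ∈ range (m + 1), a (-1) ^ d * a (r + d) * (toeplitz a (m - d)).permanent := by
  induction m generalizing r with
  | zero => simp [toeplitzShiftTop, Matrix.permanent_isEmpty]
  | succ m ih =>
    rw [permanent_toeplitzShiftTop_succ_succ ha, ih (r + 1), mul_sum, sum_range_succ' _ (m + 1),
      add_comm, toeplitzShiftTop_zero]
    congr 1
    · refine sum_congr rfl fun d _ => ?_
      rw [Nat.add_sub_add_right, pow_succ]
      push_cast
      ring_nf
    · simp

theorem permanent_toeplitz_eq_of_recurrence (ha : ∀ d < -1, a d = 0) (P : ℕ → R) (h0 : P 0 = 1)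
    (hP : ∀ m, P (m + 1) = ∑ d ∈ range (m + 1), a (-1) ^ d * a d * P (m - d)) (n : ℕ) :
    (toeplitz a n).permanent = P n := by
  induction n using Nat.strong_induction_on with
  | _ n ih =>
    cases n with
    | zero => rw [h0, Matrix.permanent_isEmpty]
    | succ m =>
      rw [← toeplitzShiftTop_zero, permanent_toeplitzShiftTop_succ ha, hP]
      exact sum_congr rfl fun d hd => by rw [Nat.cast_zero, zero_add, ih _ (by omega)]

end ToeplitzHessenberg

noncomputable def lDiag (k : ℕ) (t : ℤ → ℂ) (d : ℤ) : ℂ :=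
  if -1 ≤ d ∧ d < k then t (d + 1) / t 2 ^ d else 0

section LMatrix

variable {k : ℕ} {t : ℤ → ℂ}

theorem perH_lEntry (n : ℕ) : perH n (lEntry k t) = (toeplitz (lDiag k t) n).permanent := by
  refine sum_congr rfl fun σ _ => prod_congr rfl fun i _ => ?_
  show lDiag k t _ = lDiag k t _
  congr 1
  push_cast
  ring

theorem lDiag_of_lt_neg_one {d : ℤ} (hd : d < -1) : lDiag k t d = 0 :=
  if_neg (by omega)

theorem lDiag_neg_one_pow_mul (ht0 : t 0 = 1) (ht2 : t 2 ≠ 0) (d : ℕ) :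
    lDiag k t (-1) ^ d * lDiag k t d = if d < k then t (d + 1) else 0 := by
  have h_neg_one : lDiag k t (-1) = t 2 := by
    rw [lDiag, if_pos (by omega)]
    simp [ht0]
  by_cases hd : d < k
  · rw [h_neg_one, if_pos hd, lDiag, if_pos (by omega), zpow_natCast,
      mul_div_cancel₀ _ (pow_ne_zero d ht2)]
  · rw [if_neg hd, show lDiag k t d = 0 from if_neg (by omega), mul_zero]

theorem genFib_succ_eq_sum_range {F : ℤ → ℂ} (hFneg : ∀ n : ℤ, n < 1 → F n = 0)
    (hFrec : ∀ n : ℤ, 1 ≤ n → F (n + 1) = ∑ j ∈ Icc (1 : ℤ) k, t j * F (n + 1 - j)) (m : ℕ) :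
    F ((m + 1 : ℕ) + 1) =
      ∑ d ∈ range (m + 1), (if d < k then t (d + 1) else 0) * F ((m - d : ℕ) + 1) := by
  rw [hFrec _ (by omega)]
  have lt_of_ne_zero {d : ℕ} {x : ℂ} (h : (if d < k then t (d + 1) else 0) * x ≠ 0) : d < k := by
    by_contra hd
    simp [hd] at h
  -- match `d ↦ j = d + 1`: the extra terms vanish, those with `d ≥ k` by their coefficient and
  -- those with `j > m + 1` because `F` vanishes at nonpositive arguments
  symm
  refine sum_bij_ne_zero (fun d _ _ => (d : ℤ) + 1) ?_ ?_ ?_ ?_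
  · intro d _ hne
    have := lt_of_ne_zero hne
    rw [mem_Icc]
    omega
  · intro d₁ _ _ d₂ _ _ h
    omega
  · intro j hj hne
    obtain ⟨hj1, hjk⟩ := mem_Icc.mp hj
    have hFj : 1 ≤ ((m + 1 : ℕ) : ℤ) + 1 - j := by
      by_contra h
      exact hne (by rw [hFneg _ (by omega), mul_zero])
    obtain ⟨d, rfl⟩ : ∃ d : ℕ, j = d + 1 := ⟨(j - 1).toNat, by omega⟩
    refine ⟨d, mem_range.mpr (by omega), ?_, rfl⟩
    rw [if_pos (by omega)]
    convert hne using 3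
    omega
  · intro d hd hne
    rw [if_pos (lt_of_ne_zero hne)]
    have := mem_range.mp hd
    congr 2
    omega

end LMatrix

theorem per_L_eq_genFibPoly_general (k : ℕ) (t : ℤ → ℂ) (ht0 : t 0 = 1) (ht2 : t 2 ≠ 0)
    (F : ℤ → ℂ) (hFneg : ∀ n : ℤ, n < 1 → F n = 0) (hF1 : F 1 = 1)
    (hFrec : ∀ n : ℤ, 1 ≤ n →
      F (n + 1) = ∑ j ∈ Finset.Icc (1 : ℤ) (k : ℤ), t j * F (n + 1 - j))
    (n : ℕ) :
    perH n (lEntry k t) = F ((n : ℤ) + 1) := by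
  rw [perH_lEntry]
  refine permanent_toeplitz_eq_of_recurrence (fun d => lDiag_of_lt_neg_one) (fun n => F (n + 1))
    (by rwa [Nat.cast_zero, zero_add]) (fun m => ?_) n
  simp_rw [lDiag_neg_one_pow_mul ht0 ht2]
  exact genFib_succ_eq_sum_range hFneg hFrec m

theorem per_L_eq_genFibPoly (k : ℕ) (hk : 2 ≤ k) (t : ℤ → ℂ) (ht0 : t 0 = 1) (ht2 : t 2 ≠ 0)
    (F : ℤ → ℂ) (hFneg : ∀ n : ℤ, n < 1 → F n = 0) (hF1 : F 1 = 1)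
    (hFrec : ∀ n : ℤ, 1 ≤ n →
      F (n + 1) = ∑ j ∈ Finset.Icc (1 : ℤ) (k : ℤ), t j * F (n + 1 - j))
    (n : ℕ) (hn : 1 ≤ n) :
    perH n (lEntry k t) = F ((n : ℤ) + 1) :=
  per_L_eq_genFibPoly_general k t ht0 ht2 F hFneg hF1 hFrec n
end
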